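/- With the deterministic PSO dynamics matrix T = [[1 − φ, ω], [−φ, ω]] (φ = c₁ + c₂ > 0, ω ∈ ℝ), both eigenvalues of T have modulus strictly less than 1 if and only if |ω| < 1 and 0 < φ < 2(1 + ω). In particular the condition 2ω > (c₁ + c₂) − 2 (i.e., φ < 2ω + 2) is necessary for convergence of the iterates to (0,0) from all initial conditions. -/

import Mathlib

open Matrix

/-- Jury criterion for a real quadratic `t^2 - a t + b`. -/
lemma jury_quadratic (a b : ℝ) :
    (∀ μ : ℂ, μ ^ 2 - (a : ℂ) * μ + (b : ℂ) = 0 → ‖μ‖ < 1) ↔ (|b| < 1 ∧ |a| < 1 + b) := by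
  rcases le_or_gt 0 (a ^ 2 - 4 * b) with hD | hD
  · -- real roots
    set u := Real.sqrt (a ^ 2 - 4 * b) with hu
    have hu0 : 0 ≤ u := Real.sqrt_nonneg _
    have husq : u ^ 2 = a ^ 2 - 4 * b := Real.sq_sqrt hD
    set r := (a - u) / 2 with hr
    set s := (a + u) / 2 with hs
    have hsum : r + s = a := by rw [hr, hs]; ring
    have hprod : r * s = b := by rw [hr, hs]; nlinarith [husq]
    have hrs : r ≤ s := by rw [hr, hs]; linarith
    have hfac : ∀ μ : ℂ, μ ^ 2 - (a : ℂ) * μ + (b : ℂ) = (μ - r) * (μ - s) := by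
      intro μ
      have h1 : ((r : ℂ) + s) = a := by exact_mod_cast congrArg (Complex.ofReal) hsum
      have h2 : ((r : ℂ) * s) = b := by exact_mod_cast congrArg (Complex.ofReal) hprod
      linear_combination μ * h1 - h2
    have key : (∀ μ : ℂ, μ ^ 2 - (a : ℂ) * μ + (b : ℂ) = 0 → ‖μ‖ < 1) ↔ (|r| < 1 ∧ |s| < 1) := by
      constructor
      · intro h
        constructor
        · have := h r (by rw [hfac]; ring)
          simpa using this
        · have := h s (by rw [hfac]; ring)
          simpa using this
      · rintro ⟨h1, h2⟩ μ hμ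
        rw [hfac, mul_eq_zero, sub_eq_zero, sub_eq_zero] at hμ
        rcases hμ with h | h <;> rw [h] <;> simpa
    rw [key]
    constructor
    · rintro ⟨h1, h2⟩
      rw [abs_lt] at h1 h2 ⊢
      constructor
      · constructor <;> nlinarith
      · rw [abs_lt]; constructor <;> nlinarith
    · rintro ⟨h1, h2⟩
      rw [abs_lt] at h1 h2
      have hp1 : (1 - r) * (1 - s) > 0 := by nlinarith
      have hp2 : (1 + r) * (1 + s) > 0 := by nlinarith
      have hs1 : s < 1 := by
        by_contra hc
        push_neg at hc
        nlinarith
      have hr1 : -1 < r := by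
        by_contra hc
        push_neg at hc
        nlinarith
      constructor
      · rw [abs_lt]; constructor <;> linarith
      · rw [abs_lt]; constructor <;> linarith
  · -- complex conjugate roots
    set u := Real.sqrt (4 * b - a ^ 2) with hu
    have hu0 : 0 ≤ u := Real.sqrt_nonneg _
    have husq : u ^ 2 = 4 * b - a ^ 2 := Real.sq_sqrt (by linarith)
    have hb : a ^ 2 / 4 < b := by nlinarith
    have hb0 : 0 < b := by nlinarith [sq_nonneg a]
    set z : ℂ := ((a / 2 : ℝ) : ℂ) + ((u / 2 : ℝ) : ℂ) * Complex.I with hz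
    set w : ℂ := ((a / 2 : ℝ) : ℂ) - ((u / 2 : ℝ) : ℂ) * Complex.I with hw
    have huC : ((u : ℂ)) ^ 2 = 4 * (b : ℂ) - (a : ℂ) ^ 2 := by exact_mod_cast congrArg (Complex.ofReal) husq
    have hfac : ∀ μ : ℂ, μ ^ 2 - (a : ℂ) * μ + (b : ℂ) = (μ - z) * (μ - w) := by
      intro μ
      rw [hz, hw]
      push_cast
      linear_combination (-(1:ℂ)/4) * huC + ((u : ℂ) ^ 2 / 4) * Complex.I_sq
    have hnz : ‖z‖ ^ 2 = b := by
      rw [hz, Complex.sq_norm]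
      simp [Complex.normSq_apply]
      nlinarith
    have hnw : ‖w‖ ^ 2 = b := by
      rw [hw, Complex.sq_norm]
      simp [Complex.normSq_apply]
      nlinarith
    have key : (∀ μ : ℂ, μ ^ 2 - (a : ℂ) * μ + (b : ℂ) = 0 → ‖μ‖ < 1) ↔ b < 1 := by
      constructor
      · intro h
        have := h z (by rw [hfac]; ring)
        nlinarith [norm_nonneg z]
      · intro h μ hμ
        rw [hfac, mul_eq_zero, sub_eq_zero, sub_eq_zero] at hμ
        have h1 : ‖μ‖ ^ 2 = b := by rcases hμ with h' | h' <;> rw [h'] <;> assumption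
        nlinarith [norm_nonneg μ]
    rw [key]
    constructor
    · intro h
      refine ⟨by rw [abs_lt]; constructor <;> linarith, ?_⟩
      rw [abs_lt]
      constructor <;> nlinarith [sq_nonneg (1 - b)]
    · rintro ⟨h1, _⟩
      rw [abs_lt] at h1; exact h1.2

/-- An eigenvector with eigenvalue of modulus ≥ 1 blocks convergence. -/
lemma no_tendsto_of_eigen (T : Matrix (Fin 2) (Fin 2) ℝ) (lam : ℝ) (v : Fin 2 → ℝ)
    (hev : T *ᵥ v = lam • v) (hlam : 1 ≤ |lam|) (i : Fin 2) (hvi : v i ≠ 0) :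
    ¬ Filter.Tendsto (fun n : ℕ => (T ^ n) *ᵥ v) Filter.atTop (nhds 0) := by
  have hpow : ∀ n : ℕ, (T ^ n) *ᵥ v = lam ^ n • v := by
    intro n
    induction n with
    | zero => simp
    | succ n ih =>
      rw [pow_succ', ← Matrix.mulVec_mulVec, ih, Matrix.mulVec_smul, hev, smul_smul, ← pow_succ]
  intro h
  have hi : Filter.Tendsto (fun n : ℕ => ((T ^ n) *ᵥ v) i) Filter.atTop (nhds 0) := by
    have := ((continuous_apply i).tendsto (0 : Fin 2 → ℝ)).comp h
    exact this
  simp only [hpow, Pi.smul_apply, smul_eq_mul] at hi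
  have hev' := (NormedAddCommGroup.tendsto_nhds_zero.mp hi (|v i|) (abs_pos.mpr hvi)).exists
  obtain ⟨n, hn⟩ := hev'
  rw [Real.norm_eq_abs, abs_mul, abs_pow] at hn
  have h1 : 1 ≤ |lam| ^ n := one_le_pow₀ hlam
  nlinarith [abs_pos.mpr hvi]

/-- Jury/stability criterion for the deterministic PSO dynamics matrix
`T = [[1−φ, ω], [−φ, ω]]`: all (complex) eigenvalues of `T` have modulus
strictly less than 1 iff `|ω| < 1` and `0 < φ < 2(1 + ω)`. In particular
`2ω > φ − 2` is necessary for the iterates to converge to `(0,0)` from all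
initial conditions. -/
theorem stmt13 (ω φ : ℝ)
    (T : Matrix (Fin 2) (Fin 2) ℝ) (hT : T = !![1 - φ, ω; -φ, ω]) :
    ((∀ μ ∈ spectrum ℂ (T.map (Complex.ofReal)), ‖μ‖ < 1) ↔
      (|ω| < 1 ∧ 0 < φ ∧ φ < 2 * (1 + ω))) ∧
    ((∀ x : Fin 2 → ℝ,
        Filter.Tendsto (fun n : ℕ => (T ^ n) *ᵥ x) Filter.atTop (nhds 0)) →
      2 * ω > φ - 2) := by
  have hspec : ∀ μ : ℂ, μ ∈ spectrum ℂ (T.map (Complex.ofReal)) ↔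
      μ ^ 2 - ((1 + ω - φ : ℝ) : ℂ) * μ + (ω : ℂ) = 0 := by
    intro μ
    rw [spectrum.mem_iff, Matrix.isUnit_iff_isUnit_det, isUnit_iff_ne_zero, not_ne_iff]
    have hmap : (T.map Complex.ofReal) = !![(1 : ℂ) - φ, ω; -φ, ω] := by
      rw [hT]; ext i j; fin_cases i <;> fin_cases j <;> simp [Matrix.map_apply]
    rw [hmap]
    have : (algebraMap ℂ (Matrix (Fin 2) (Fin 2) ℂ) μ - !![(1 : ℂ) - φ, ω; -φ, ω]).det
        = μ ^ 2 - ((1 + ω - φ : ℝ) : ℂ) * μ + (ω : ℂ) := by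
      simp [Algebra.algebraMap_eq_smul_one, Matrix.det_fin_two, Matrix.smul_apply,
        Matrix.one_apply]
      ring
    rw [this]
  constructor
  · rw [show (∀ μ ∈ spectrum ℂ (T.map (Complex.ofReal)), ‖μ‖ < 1) ↔
        (∀ μ : ℂ, μ ^ 2 - ((1 + ω - φ : ℝ) : ℂ) * μ + (ω : ℂ) = 0 → ‖μ‖ < 1) by
      constructor
      · intro h μ hμ; exact h μ ((hspec μ).mpr hμ)
      · intro h μ hμ; exact h μ ((hspec μ).mp hμ)]
    rw [jury_quadratic (1 + ω - φ) ω]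
    constructor
    · rintro ⟨h1, h2⟩
      rw [abs_lt] at h2
      exact ⟨h1, by linarith [h2.1, h2.2], by linarith [h2.1, h2.2]⟩
    · rintro ⟨h1, h2, h3⟩
      refine ⟨h1, ?_⟩
      rw [abs_lt]
      constructor <;> linarith
  · intro hconv
    by_contra hc
    push_neg at hc
    -- hc : 2 * ω ≤ φ - 2, i.e. φ ≥ 2 + 2ω
    rcases eq_or_ne φ 0 with hφ | hφ
    · -- eigenvalue 1, eigenvector (1,0)
      have hev : T *ᵥ ![1, 0] = (1 : ℝ) • ![1, 0] := by
        subst hφ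
        rw [hT]
        ext i
        fin_cases i <;> simp [Matrix.mulVec, dotProduct, Fin.sum_univ_two]
      exact no_tendsto_of_eigen T 1 ![1, 0] hev (by norm_num) 0 (by norm_num)
        (hconv ![1, 0])
    · -- real eigenvalue ≤ -1
      set a := 1 + ω - φ with ha
      set D := a ^ 2 - 4 * ω with hD
      have hDge : (a + 2) ^ 2 ≤ D := by rw [hD, ha]; nlinarith
      have hD0 : 0 ≤ D := le_trans (sq_nonneg _) hDge
      have hsq : Real.sqrt D ^ 2 = D := Real.sq_sqrt hD0
      have hsge : a + 2 ≤ Real.sqrt D := by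
        calc a + 2 ≤ |a + 2| := le_abs_self _
        _ = Real.sqrt ((a + 2) ^ 2) := (Real.sqrt_sq_eq_abs _).symm
        _ ≤ Real.sqrt D := Real.sqrt_le_sqrt hDge
      set lam := (a - Real.sqrt D) / 2 with hlam
      have hlamle : lam ≤ -1 := by rw [hlam]; linarith
      have hlam2 : lam ^ 2 = a * lam - ω := by
        rw [hlam]; nlinarith [hsq]
      have hev : T *ᵥ ![ω - lam, φ] = lam • ![ω - lam, φ] := by
        rw [hT]
        ext i
        fin_cases i <;>
          simp [Matrix.mulVec, dotProduct, Fin.sum_univ_two] <;>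
          nlinarith [hlam2]
      exact no_tendsto_of_eigen T lam ![ω - lam, φ] hev (le_abs.mpr (Or.inr (by linarith))) 1 (by simpa)
        (hconv ![ω - lam, φ])
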